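/- arXiv:1704.07625 — 2 statements merged into one kernel-verified Lean document; each statement's English description precedes it below -/
import Mathlib

section
/- Let X be a weighted sequence of length n over a finite alphabet Σ and let z ≥ 1 be real. For every position i with 1 ≤ i ≤ n−1 and every string Q over Σ: Σ_{c∈Σ} ⌊z·P_X(cQ,i)⌋ ≤ ⌊z·P_X(Q,i+1)⌋, where cQ denotes Q prepended by the letter c. -/
open scoped Classical
open Finset

variable {α : Type*}

/-- Matching probability `P_X(P,i)` of pattern `P` at (1-based) position `i`
in a weighted sequence of length `n` with letter probabilities `p`. -/
def matchProb (n : ℕ) (p : ℕ → α → ℝ) : List α → ℕ → ℝ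
  | [], _ => 1
  | c :: P, i => if i ≤ n then p i c * matchProb n p P (i + 1) else 0

/-- `p` describes a weighted sequence of length `n`: at each position `i ∈ {1,…,n}`
the letter probabilities are nonnegative and sum to 1. -/
def IsWeighted [Fintype α] (n : ℕ) (p : ℕ → α → ℝ) : Prop :=
  ∀ i, 1 ≤ i → i ≤ n → (∀ c, 0 ≤ p i c) ∧ ∑ c, p i c = 1

/-- A property array for strings of length `n`:
`π i ∈ {i-1,…,n}` for `i ∈ {1,…,n}` and `π` is nondecreasing on `{1,…,n}`. -/
def IsPropertyArray (n : ℕ) (π : ℕ → ℕ) : Prop :=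
  (∀ i, 1 ≤ i → i ≤ n → i - 1 ≤ π i ∧ π i ≤ n) ∧
    ∀ i, 1 ≤ i → i + 1 ≤ n → π i ≤ π (i + 1)

/-- The factor `S[i..j]` (1-based, empty when `j < i`). -/
def factor (S : List α) (i j : ℕ) : List α := (S.drop (i - 1)).take (j + 1 - i)

/-- `i ∈ Occ_π(P,S)`: `P = S[i..i+|P|-1]` and `i+|P|-1 ≤ π i`. -/
def occursAt (S : List α) (π : ℕ → ℕ) (P : List α) (i : ℕ) : Prop :=
  factor S i (i + P.length - 1) = P ∧ i + P.length - 1 ≤ π i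

/-- `Count_𝒮(P,i)`: number of members of the family in which `P` occurs at `i`
respecting the property. -/
noncomputable def countOcc {k : ℕ} (S : Fin k → List α) (π : Fin k → ℕ → ℕ)
    (P : List α) (i : ℕ) : ℕ :=
  (Finset.univ.filter fun j => occursAt (S j) (π j) P i).card

/-- `P` is compatible with `Q` if `P = ε` or `P = cQ'` for a letter `c` and a prefix `Q'` of `Q`. -/
def Compatible (P Q : List α) : Prop :=
  P = [] ∨ ∃ (c : α) (Q' : List α), Q' <+: Q ∧ P = c :: Q'

/-- A random string `S : Fin n → α` matches pattern `P` at (1-based) position `i`. -/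
def Matches {n : ℕ} (S : Fin n → α) (P : List α) (i : ℕ) : Prop :=
  ((List.ofFn S).drop (i - 1)).take P.length = P

/-- The probability of the outcome `S` under the product distribution determined by `p`. -/
def strWeight (n : ℕ) (p : ℕ → α → ℝ) (S : Fin n → α) : ℝ :=
  ∏ j : Fin n, p ((j : ℕ) + 1) (S j)

theorem Int.sum_floor_le_floor_sum {ι R : Type*} [Ring R] [LinearOrder R] [IsOrderedRing R]
    [FloorRing R] (s : Finset ι) (f : ι → R) : ∑ i ∈ s, ⌊f i⌋ ≤ ⌊∑ i ∈ s, f i⌋ :=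
  Int.le_floor.2 <| by
    push_cast
    exact sum_le_sum fun i _ => Int.floor_le (f i)

theorem Int.sum_floor_mul_le_floor_of_sum_eq_one {ι R : Type*} [Ring R] [LinearOrder R]
    [IsOrderedRing R] [FloorRing R] {s : Finset ι} {w : ι → R} (hw : ∑ i ∈ s, w i = 1) (x : R) :
    ∑ i ∈ s, ⌊w i * x⌋ ≤ ⌊x⌋ :=
  calc ∑ i ∈ s, ⌊w i * x⌋ ≤ ⌊∑ i ∈ s, w i * x⌋ := Int.sum_floor_le_floor_sum s _
    _ = ⌊x⌋ := by rw [← sum_mul, hw, one_mul]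

theorem matchProb_cons_of_le {n i : ℕ} (p : ℕ → α → ℝ) (c : α) (Q : List α) (h : i ≤ n) :
    matchProb n p (c :: Q) i = p i c * matchProb n p Q (i + 1) := by
  simp [matchProb, h]

theorem sum_floor_prepend_le_general [Fintype α]
    (n : ℕ) (p : ℕ → α → ℝ) (hp : IsWeighted n p) (z : ℝ) :
    ∀ (i : ℕ), 1 ≤ i → i + 1 ≤ n → ∀ Q : List α,
      ∑ c : α, ⌊z * matchProb n p (c :: Q) i⌋ ≤ ⌊z * matchProb n p Q (i + 1)⌋ := by
  intro i hi hin Q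
  have hin' : i ≤ n := by omega
  simp only [matchProb_cons_of_le p _ Q hin', mul_left_comm z]
  exact Int.sum_floor_mul_le_floor_of_sum_eq_one (hp i hi hin').2 _

/-- `Σ_{c∈Σ} ⌊z·P_X(cQ,i)⌋ ≤ ⌊z·P_X(Q,i+1)⌋`. -/
theorem sum_floor_prepend_le [Fintype α]
    (n : ℕ) (p : ℕ → α → ℝ) (hp : IsWeighted n p) (z : ℝ) (hz : 1 ≤ z) :
    ∀ (i : ℕ), 1 ≤ i → i + 1 ≤ n → ∀ Q : List α,
      ∑ c : α, ⌊z * matchProb n p (c :: Q) i⌋ ≤ ⌊z * matchProb n p Q (i + 1)⌋ :=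
  sum_floor_prepend_le_general n p hp z
end

section
/- Let X be a weighted sequence of length n over a finite alphabet Σ and let z ≥ 1 be real. For every position i with 1 ≤ i ≤ n−1, there is a one-to-one correspondence between the multisets M_{i+1} and M_i matching each element Q of M_{i+1} with an element P of M_i that is compatible with Q; that is, the multisets M_i and M_{i+1} are related (in the sense of Multiset.Rel) by the compatibility relation. -/
open scoped Classical
open Finset

variable {α : Type*}

/- ===== auxiliary lemmas ===== -/

lemma list_eq_map_get {β : Type*} (L : List β) :
    (↑L : Multiset β) = Multiset.map L.get (univ : Finset (Fin L.length)).val := by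
  conv_lhs => rw [← List.ofFn_get L]
  rw [List.ofFn_eq_map, Fin.univ_def]
  rfl

lemma count_eq_card_fiber {β : Type*} [DecidableEq β] (L : List β) (Q : β) :
    (↑L : Multiset β).count Q = (univ.filter (fun j : Fin L.length => L.get j = Q)).card := by
  rw [list_eq_map_get L, Multiset.count_map]
  simp only [Finset.card, Finset.filter_val]
  congr 1
  apply Multiset.filter_congr
  intro j _
  exact ⟨Eq.symm, Eq.symm⟩

lemma rel_of_get {β : Type*} (r : β → β → Prop) (A B : List β)
    (f : Fin B.length → Fin A.length) (hf : Function.Bijective f)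
    (h : ∀ j, r (A.get (f j)) (B.get j)) : Multiset.Rel r ↑A ↑B := by
  have hA : (↑A : Multiset β)
      = Multiset.map (fun j => A.get (f j)) (univ : Finset (Fin B.length)).val := by
    rw [list_eq_map_get A, ← Multiset.map_univ_val_equiv (Equiv.ofBijective f hf),
      Multiset.map_map]
    rfl
  rw [hA, list_eq_map_get B, Multiset.rel_map]
  exact Multiset.rel_refl_of_refl_on (fun a _ => h a)

lemma matchProb_nonneg [Fintype α] {n : ℕ} {p : ℕ → α → ℝ} (hp : IsWeighted n p) :
    ∀ (P : List α) (j : ℕ), 1 ≤ j → 0 ≤ matchProb n p P j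
  | [], j, _ => by rw [matchProb]; norm_num
  | c :: P, j, hj => by
    rw [matchProb]
    split
    · exact mul_nonneg ((hp j hj ‹j ≤ n›).1 c)
        (matchProb_nonneg hp P (j + 1) (by omega))
    · exact le_refl 0

lemma matchProb_eq_zero {n : ℕ} {p : ℕ → α → ℝ} :
    ∀ (P : List α) (j : ℕ), P ≠ [] → n + 1 < j + P.length → matchProb n p P j = 0
  | [], _, h, _ => absurd rfl h
  | c :: P, j, _, hlen => by
    rw [matchProb]
    split
    · rcases P with _ | ⟨d, P⟩
      · simp at hlen; omega
      · rw [matchProb_eq_zero (d :: P) (j + 1) (by simp) (by simp at hlen ⊢; omega),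
          mul_zero]
    · rfl

lemma sum_floor_le [Fintype α] {z x : ℝ} (q : α → ℝ) (hsum : ∑ c, q c = 1) :
    ∑ c : α, ⌊z * (q c * x)⌋ ≤ ⌊z * x⌋ := by
  rw [Int.le_floor]
  push_cast
  calc ∑ c : α, (⌊z * (q c * x)⌋ : ℝ) ≤ ∑ c : α, z * (q c * x) :=
        Finset.sum_le_sum fun c _ => Int.floor_le _
    _ = (∑ c : α, q c) * (z * x) := by
        rw [Finset.sum_mul]
        exact Finset.sum_congr rfl fun c _ => by ring
    _ = z * x := by rw [hsum, one_mul]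

lemma mem_V [Fintype α] (N : ℕ) (Q : List α) :
    Q ∈ (Finset.range (N + 1)).biUnion
      (fun ℓ => (univ : Finset (Fin ℓ → α)).image List.ofFn)
    ↔ Q.length ≤ N := by
  simp only [mem_biUnion, mem_range, mem_image, mem_univ, true_and]
  constructor
  · rintro ⟨ℓ, hℓ, f, rfl⟩
    simp only [List.length_ofFn]
    omega
  · intro h
    exact ⟨Q.length, by omega, Q.get, List.ofFn_get Q⟩

/-- telescoping sum over a dropLast-closed finset of lists -/
lemma telescope [Fintype α] (T : Finset (List α)) (h0 : [] ∈ T)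
    (hcl : ∀ (R : List α) (c : α), R ++ [c] ∈ T → R ∈ T) (t : List α → ℤ) :
    ∑ Q ∈ T, (t Q - ∑ c : α, t (Q ++ [c]))
      = t [] - ∑ x ∈ (T ×ˢ (univ : Finset α)).filter (fun x => x.1 ++ [x.2] ∉ T),
          t (x.1 ++ [x.2]) := by
  have hsplit : ∑ Q ∈ T, (t Q - ∑ c : α, t (Q ++ [c]))
      = ∑ Q ∈ T, t Q - ∑ x ∈ T ×ˢ (univ : Finset α), t (x.1 ++ [x.2]) := by
    rw [Finset.sum_sub_distrib, Finset.sum_product]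
  have hsplit2 : ∑ x ∈ T ×ˢ (univ : Finset α), t (x.1 ++ [x.2])
      = ∑ x ∈ (T ×ˢ (univ : Finset α)).filter (fun x => x.1 ++ [x.2] ∈ T),
          t (x.1 ++ [x.2])
        + ∑ x ∈ (T ×ˢ (univ : Finset α)).filter (fun x => x.1 ++ [x.2] ∉ T),
          t (x.1 ++ [x.2]) :=
    (Finset.sum_filter_add_sum_filter_not _ _ _).symm
  have hinj : ∀ x ∈ (T ×ˢ (univ : Finset α)).filter (fun x => x.1 ++ [x.2] ∈ T),
      ∀ y ∈ (T ×ˢ (univ : Finset α)).filter (fun x => x.1 ++ [x.2] ∈ T),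
      (fun x : List α × α => x.1 ++ [x.2]) x = (fun x : List α × α => x.1 ++ [x.2]) y
        → x = y := by
    rintro ⟨Q, c⟩ _ ⟨R, d⟩ _ h
    obtain ⟨h1, h2⟩ := List.append_inj' h rfl
    simp only [List.cons.injEq] at h2
    exact Prod.ext h1 h2.1
  have himg : ((T ×ˢ (univ : Finset α)).filter (fun x => x.1 ++ [x.2] ∈ T)).image
      (fun x : List α × α => x.1 ++ [x.2]) = T.erase [] := by
    ext R
    simp only [mem_image, mem_erase, mem_filter, mem_product, mem_univ, true_and]
    constructor
    · rintro ⟨⟨Q, c⟩, ⟨_, hmem⟩, rfl⟩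
      exact ⟨by simp, hmem⟩
    · rintro ⟨hne, hR⟩
      have heq : R.dropLast ++ [R.getLast hne] = R := List.dropLast_append_getLast hne
      have hRT : R.dropLast ++ [R.getLast hne] ∈ T := by rw [heq]; exact hR
      exact ⟨(R.dropLast, R.getLast hne), ⟨⟨hcl _ _ hRT, trivial⟩, hRT⟩, heq⟩
  have hin : ∑ x ∈ (T ×ˢ (univ : Finset α)).filter (fun x => x.1 ++ [x.2] ∈ T),
      t (x.1 ++ [x.2]) = ∑ R ∈ T.erase [], t R := by
    rw [← himg, Finset.sum_image hinj]
  have htot : ∑ Q ∈ T, t Q = t [] + ∑ R ∈ T.erase [], t R :=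
    (Finset.add_sum_erase T t h0).symm
  rw [hsplit, hsplit2, hin, htot]
  ring

/-- the multisets `M_i` and `M_{i+1}` are related by the compatibility
relation: there is a perfect matching pairing each `Q ∈ M_{i+1}` with a compatible
`P ∈ M_i`. -/
theorem multiset_rel_compatible [Fintype α]
    (n : ℕ) (p : ℕ → α → ℝ) (hp : IsWeighted n p) (z : ℝ) (hz : 1 ≤ z)
    (i : ℕ) (hi1 : 1 ≤ i) (hin : i + 1 ≤ n) :
    ∀ M M' : Multiset (List α),
      (∀ P : List α, (M.count P : ℤ) =
        ⌊z * matchProb n p P i⌋ - ∑ c : α, ⌊z * matchProb n p (P ++ [c]) i⌋) →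
      (∀ P : List α, (M'.count P : ℤ) =
        ⌊z * matchProb n p P (i + 1)⌋ -
          ∑ c : α, ⌊z * matchProb n p (P ++ [c]) (i + 1)⌋) →
      Multiset.Rel (fun P Q => Compatible P Q) M M' := by
  intro M M' hM hM'
  have hi_le : i ≤ n := by omega
  set t1 : List α → ℤ := fun P => ⌊z * matchProb n p P i⌋ with ht1
  set t2 : List α → ℤ := fun P => ⌊z * matchProb n p P (i + 1)⌋ with ht2
  have hM1 : ∀ P : List α, (M.count P : ℤ) = t1 P - ∑ c : α, t1 (P ++ [c]) := hM
  have hM2 : ∀ P : List α, (M'.count P : ℤ) = t2 P - ∑ c : α, t2 (P ++ [c]) := hM'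
  have ht1nil : t1 [] = ⌊z⌋ := by
    show ⌊z * matchProb n p [] i⌋ = ⌊z⌋
    rw [matchProb, mul_one]
  have ht2nil : t2 [] = ⌊z⌋ := by
    show ⌊z * matchProb n p [] (i + 1)⌋ = ⌊z⌋
    rw [matchProb, mul_one]
  -- key pointwise inequality
  have key : ∀ R : List α, ∑ c : α, t1 (c :: R) ≤ t2 R := by
    intro R
    have hcons : ∀ c : α, matchProb n p (c :: R) i = p i c * matchProb n p R (i + 1) := by
      intro c
      rw [matchProb, if_pos hi_le]
    show ∑ c : α, ⌊z * matchProb n p (c :: R) i⌋ ≤ ⌊z * matchProb n p R (i + 1)⌋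
    simp only [hcons]
    exact sum_floor_le (p i) (hp i hi1 hi_le).2
  -- main counting inequality
  have main : ∀ S : Finset (List α), S.Nonempty →
      ∑ Q ∈ S, (M'.count Q : ℤ)
        ≤ (M.count [] : ℤ) +
          ∑ Q ∈ S.biUnion (fun R => R.inits.toFinset), ∑ c : α, (M.count (c :: Q) : ℤ) := by
    intro S hS
    set T := S.biUnion (fun R => R.inits.toFinset) with hTdef
    have h0 : [] ∈ T := by
      obtain ⟨R, hR⟩ := hS
      exact mem_biUnion.2 ⟨R, hR, by simp [List.mem_inits]⟩
    have hcl : ∀ (R : List α) (c : α), R ++ [c] ∈ T → R ∈ T := by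
      intro R c h
      rw [hTdef, mem_biUnion] at h ⊢
      obtain ⟨Q, hQ, hmem⟩ := h
      rw [List.mem_toFinset, List.mem_inits] at hmem
      refine ⟨Q, hQ, ?_⟩
      rw [List.mem_toFinset, List.mem_inits]
      exact (List.prefix_append R [c]).trans hmem
    have hST : S ⊆ T := fun Q hQ => mem_biUnion.2 ⟨Q, hQ, by simp [List.mem_inits]⟩
    set B := (T ×ˢ (univ : Finset α)).filter (fun x => x.1 ++ [x.2] ∉ T) with hBdef
    have hL1 : ∑ Q ∈ S, (M'.count Q : ℤ) ≤ ∑ Q ∈ T, (M'.count Q : ℤ) :=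
      Finset.sum_le_sum_of_subset_of_nonneg hST (fun _ _ _ => Int.ofNat_nonneg _)
    have hL2 : ∑ Q ∈ T, (M'.count Q : ℤ) = t2 [] - ∑ x ∈ B, t2 (x.1 ++ [x.2]) := by
      rw [Finset.sum_congr rfl (fun Q _ => hM2 Q)]
      exact telescope T h0 hcl t2
    have hR1 : ∀ c : α, ∑ Q ∈ T, (t1 (c :: Q) - ∑ d : α, t1 ((c :: Q) ++ [d]))
        = t1 [c] - ∑ x ∈ B, t1 (c :: (x.1 ++ [x.2])) :=
      fun c => telescope T h0 hcl (fun Q => t1 (c :: Q))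
    have hR2 : (M.count [] : ℤ) + ∑ Q ∈ T, ∑ c : α, (M.count (c :: Q) : ℤ)
        = t1 [] - ∑ x ∈ B, ∑ c : α, t1 (c :: (x.1 ++ [x.2])) := by
      have e1 : ∑ Q ∈ T, ∑ c : α, (M.count (c :: Q) : ℤ)
          = ∑ c : α, ∑ Q ∈ T, (t1 (c :: Q) - ∑ d : α, t1 ((c :: Q) ++ [d])) := by
        rw [Finset.sum_comm]
        exact Finset.sum_congr rfl fun c _ => Finset.sum_congr rfl fun Q _ => hM1 (c :: Q)
      have e2 : ∑ c : α, ∑ Q ∈ T, (t1 (c :: Q) - ∑ d : α, t1 ((c :: Q) ++ [d]))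
          = ∑ c : α, t1 [c] - ∑ x ∈ B, ∑ c : α, t1 (c :: (x.1 ++ [x.2])) := by
        rw [Finset.sum_congr rfl (fun c _ => hR1 c), Finset.sum_sub_distrib,
          Finset.sum_comm]
      have e3 : (M.count [] : ℤ) = t1 [] - ∑ c : α, t1 [c] := by
        have h := hM1 []
        simpa using h
      rw [e1, e2, e3]
      ring
    have hB2 : ∑ x ∈ B, ∑ c : α, t1 (c :: (x.1 ++ [x.2])) ≤ ∑ x ∈ B, t2 (x.1 ++ [x.2]) :=
      Finset.sum_le_sum fun x _ => key _
    linarith [hL1, hL2, hR2, hB2, ht1nil, ht2nil]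
  -- cardinalities
  set N := n + 1 - i with hN
  set V : Finset (List α) := (Finset.range (N + 1)).biUnion
    (fun ℓ => (univ : Finset (Fin ℓ → α)).image List.ofFn) with hVdef
  have hVmem : ∀ Q : List α, Q ∈ V ↔ Q.length ≤ N := mem_V N
  have hV0 : [] ∈ V := (hVmem []).2 (by simp)
  have hVcl : ∀ (R : List α) (c : α), R ++ [c] ∈ V → R ∈ V := by
    intro R c h
    rw [hVmem] at h ⊢
    simp only [List.length_append, List.length_singleton] at h
    omega
  have hsupp1 : ∀ Q : List α, Q ∉ V → M.count Q = 0 := by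
    intro Q hQ
    have hlen : N < Q.length := by
      by_contra h
      exact hQ ((hVmem Q).2 (by omega))
    have hne : Q ≠ [] := by
      intro h
      rw [h] at hlen
      simp at hlen
    have hz1 : t1 Q = 0 := by
      show ⌊z * matchProb n p Q i⌋ = 0
      rw [matchProb_eq_zero Q i hne (by omega), mul_zero, Int.floor_zero]
    have hz2 : ∀ c : α, t1 (Q ++ [c]) = 0 := by
      intro c
      show ⌊z * matchProb n p (Q ++ [c]) i⌋ = 0
      rw [matchProb_eq_zero (Q ++ [c]) i (by simp)
        (by simp only [List.length_append, List.length_singleton]; omega),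
        mul_zero, Int.floor_zero]
    have : (M.count Q : ℤ) = 0 := by
      rw [hM1 Q, hz1, Finset.sum_congr rfl fun c _ => hz2 c]
      simp
    exact_mod_cast this
  have hsupp2 : ∀ Q : List α, Q ∉ V → M'.count Q = 0 := by
    intro Q hQ
    have hlen : N < Q.length := by
      by_contra h
      exact hQ ((hVmem Q).2 (by omega))
    have hne : Q ≠ [] := by
      intro h
      rw [h] at hlen
      simp at hlen
    have hz1 : t2 Q = 0 := by
      show ⌊z * matchProb n p Q (i + 1)⌋ = 0
      rw [matchProb_eq_zero Q (i + 1) hne (by omega), mul_zero, Int.floor_zero]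
    have hz2 : ∀ c : α, t2 (Q ++ [c]) = 0 := by
      intro c
      show ⌊z * matchProb n p (Q ++ [c]) (i + 1)⌋ = 0
      rw [matchProb_eq_zero (Q ++ [c]) (i + 1) (by simp)
        (by simp only [List.length_append, List.length_singleton]; omega),
        mul_zero, Int.floor_zero]
    have : (M'.count Q : ℤ) = 0 := by
      rw [hM2 Q, hz1, Finset.sum_congr rfl fun c _ => hz2 c]
      simp
    exact_mod_cast this
  have hbd1 : ∀ x ∈ (V ×ˢ (univ : Finset α)).filter (fun x => x.1 ++ [x.2] ∉ V),
      t1 (x.1 ++ [x.2]) = (0 : ℤ) := by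
    rintro ⟨Q, c⟩ hx
    simp only [mem_filter, mem_product, mem_univ, and_true] at hx
    have hlen : N < (Q ++ [c]).length := by
      by_contra h
      exact hx.2 ((hVmem _).2 (by omega))
    simp only [List.length_append, List.length_singleton] at hlen
    show ⌊z * matchProb n p (Q ++ [c]) i⌋ = 0
    rw [matchProb_eq_zero (Q ++ [c]) i (by simp)
      (by simp only [List.length_append, List.length_singleton]; omega),
      mul_zero, Int.floor_zero]
  have hbd2 : ∀ x ∈ (V ×ˢ (univ : Finset α)).filter (fun x => x.1 ++ [x.2] ∉ V),
      t2 (x.1 ++ [x.2]) = (0 : ℤ) := by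
    rintro ⟨Q, c⟩ hx
    simp only [mem_filter, mem_product, mem_univ, and_true] at hx
    have hlen : N < (Q ++ [c]).length := by
      by_contra h
      exact hx.2 ((hVmem _).2 (by omega))
    simp only [List.length_append, List.length_singleton] at hlen
    show ⌊z * matchProb n p (Q ++ [c]) (i + 1)⌋ = 0
    rw [matchProb_eq_zero (Q ++ [c]) (i + 1) (by simp)
      (by simp only [List.length_append, List.length_singleton]; omega),
      mul_zero, Int.floor_zero]
  have hcard1 : (Multiset.card M : ℤ) = ⌊z⌋ := by
    have hsum : ∑ Q ∈ V, (M.count Q : ℤ) = ⌊z⌋ := by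
      rw [Finset.sum_congr rfl (fun Q _ => hM1 Q), telescope V hV0 hVcl t1,
        Finset.sum_congr rfl hbd1]
      simp [ht1nil]
    have hsub : M.toFinset ⊆ V := by
      intro Q hQ
      by_contra h
      exact (Multiset.count_eq_zero.1 (hsupp1 Q h)) (Multiset.mem_toFinset.1 hQ)
    have hsum2 : ∑ Q ∈ V, M.count Q = Multiset.card M := by
      rw [← Multiset.toFinset_sum_count_eq M]
      exact (Finset.sum_subset hsub (fun x _ hx =>
        Multiset.count_eq_zero.2 (fun hm => hx (Multiset.mem_toFinset.2 hm)))).symm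
    rw [← hsum]
    exact_mod_cast (congrArg (fun k : ℕ => (k : ℤ)) hsum2).symm
  have hcard2 : (Multiset.card M' : ℤ) = ⌊z⌋ := by
    have hsum : ∑ Q ∈ V, (M'.count Q : ℤ) = ⌊z⌋ := by
      rw [Finset.sum_congr rfl (fun Q _ => hM2 Q), telescope V hV0 hVcl t2,
        Finset.sum_congr rfl hbd2]
      simp [ht2nil]
    have hsub : M'.toFinset ⊆ V := by
      intro Q hQ
      by_contra h
      exact (Multiset.count_eq_zero.1 (hsupp2 Q h)) (Multiset.mem_toFinset.1 hQ)
    have hsum2 : ∑ Q ∈ V, M'.count Q = Multiset.card M' := by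
      rw [← Multiset.toFinset_sum_count_eq M']
      exact (Finset.sum_subset hsub (fun x _ hx =>
        Multiset.count_eq_zero.2 (fun hm => hx (Multiset.mem_toFinset.2 hm)))).symm
    rw [← hsum]
    exact_mod_cast (congrArg (fun k : ℕ => (k : ℤ)) hsum2).symm
  -- Hall's theorem on tokens
  set L : List (List α) := M.toList with hLdef
  set L' : List (List α) := M'.toList with hL'def
  have hML : (↑L : Multiset (List α)) = M := Multiset.coe_toList M
  have hML' : (↑L' : Multiset (List α)) = M' := Multiset.coe_toList M'
  set nb : Fin L'.length → Finset (Fin L.length) :=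
    fun j => univ.filter (fun k => Compatible (L.get k) (L'.get j)) with hnb
  have hall : ∀ s : Finset (Fin L'.length), s.card ≤ (s.biUnion nb).card := by
    intro s
    rcases s.eq_empty_or_nonempty with rfl | hs
    · simp
    set S := s.image (fun j => L'.get j) with hSdef
    have hSne : S.Nonempty := hs.image _
    have h1 : s.card ≤ ∑ Q ∈ S, M'.count Q := by
      rw [Finset.card_eq_sum_card_image (fun j => L'.get j) s]
      refine Finset.sum_le_sum fun Q hQ => ?_
      have hQc : M'.count Q = (univ.filter (fun j : Fin L'.length => L'.get j = Q)).card := by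
        rw [← hML']
        exact count_eq_card_fiber L' Q
      rw [hQc]
      exact Finset.card_le_card (Finset.filter_subset_filter _ (Finset.subset_univ s))
    set T := S.biUnion (fun R => R.inits.toFinset) with hTdef
    set NbF := insert ([] : List α)
      ((T ×ˢ (univ : Finset α)).image (fun x => x.2 :: x.1)) with hNbFdef
    have hfib : ∀ P : List α,
        M.count P = (univ.filter (fun k : Fin L.length => L.get k = P)).card := by
      intro P
      rw [← hML]
      exact count_eq_card_fiber L P
    have hsub2 : ∀ P ∈ NbF,
        (univ.filter (fun k : Fin L.length => L.get k = P)) ⊆ s.biUnion nb := by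
      intro P hP k hk
      rw [Finset.mem_filter] at hk
      rw [Finset.mem_biUnion]
      rcases Finset.mem_insert.1 hP with rfl | hP'
      · obtain ⟨j, hj⟩ := hs
        refine ⟨j, hj, Finset.mem_filter.2 ⟨mem_univ _, ?_⟩⟩
        rw [hk.2]
        exact Or.inl rfl
      · obtain ⟨⟨Q', c⟩, hx, hPeq⟩ := Finset.mem_image.1 hP'
        rw [Finset.mem_product] at hx
        have hx1 : Q' ∈ T := hx.1
        rw [hTdef, Finset.mem_biUnion] at hx1
        obtain ⟨R, hRS, hmem⟩ := hx1
        rw [List.mem_toFinset, List.mem_inits] at hmem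
        rw [hSdef] at hRS
        obtain ⟨j, hjs, hjR⟩ := Finset.mem_image.1 hRS
        refine ⟨j, hjs, Finset.mem_filter.2 ⟨mem_univ _, ?_⟩⟩
        rw [hk.2, ← hPeq]
        exact Or.inr ⟨c, Q', by rw [hjR]; exact hmem, rfl⟩
    have hdisj : ∀ P1 ∈ NbF, ∀ P2 ∈ NbF, P1 ≠ P2 →
        Disjoint (univ.filter (fun k : Fin L.length => L.get k = P1))
          (univ.filter (fun k : Fin L.length => L.get k = P2)) := by
      intro P1 _ P2 _ hne
      rw [Finset.disjoint_left]
      intro k h1 h2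
      rw [Finset.mem_filter] at h1 h2
      exact hne (h1.2.symm.trans h2.2)
    have h2 : ∑ P ∈ NbF, M.count P ≤ (s.biUnion nb).card := by
      rw [Finset.sum_congr rfl (fun P _ => hfib P), ← Finset.card_biUnion hdisj]
      exact Finset.card_le_card (Finset.biUnion_subset.2 hsub2)
    have hnilnm : ([] : List α) ∉ (T ×ˢ (univ : Finset α)).image (fun x => x.2 :: x.1) := by
      simp
    have hinj2 : ∀ x ∈ T ×ˢ (univ : Finset α), ∀ y ∈ T ×ˢ (univ : Finset α),
        (fun x : List α × α => x.2 :: x.1) x = (fun x : List α × α => x.2 :: x.1) y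
          → x = y := by
      rintro ⟨Q, c⟩ _ ⟨R, d⟩ _ h
      simp only [List.cons.injEq] at h
      exact Prod.ext h.2 h.1
    have h3 : ∑ P ∈ NbF, M.count P
        = M.count [] + ∑ Q ∈ T, ∑ c : α, M.count (c :: Q) := by
      rw [hNbFdef, Finset.sum_insert hnilnm, Finset.sum_image hinj2, Finset.sum_product]
    have hfin : (s.card : ℤ) ≤ ((s.biUnion nb).card : ℤ) := by
      calc (s.card : ℤ) ≤ ∑ Q ∈ S, (M'.count Q : ℤ) := by exact_mod_cast h1
        _ ≤ (M.count [] : ℤ) + ∑ Q ∈ T, ∑ c : α, (M.count (c :: Q) : ℤ) := main S hSne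
        _ = ∑ P ∈ NbF, (M.count P : ℤ) := by exact_mod_cast h3.symm
        _ ≤ ((s.biUnion nb).card : ℤ) := by exact_mod_cast h2
    exact_mod_cast hfin
  obtain ⟨f, hfinj, hfmem⟩ := (Finset.all_card_le_biUnion_card_iff_exists_injective nb).1 hall
  have hlen : L.length = L'.length := by
    have hcc : Multiset.card M = Multiset.card M' := by
      have : (Multiset.card M : ℤ) = (Multiset.card M' : ℤ) := by rw [hcard1, hcard2]
      exact_mod_cast this
    rw [hLdef, hL'def, Multiset.length_toList, Multiset.length_toList, hcc]
  have hbij : Function.Bijective f := by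
    rw [Fintype.bijective_iff_injective_and_card]
    exact ⟨hfinj, by simp [hlen]⟩
  have hcomp : ∀ j, Compatible (L.get (f j)) (L'.get j) := by
    intro j
    have h := hfmem j
    rw [hnb] at h
    exact (Finset.mem_filter.1 h).2
  rw [← hML, ← hML']
  exact rel_of_get _ L L' f hbij hcomp
end
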